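/- Let 1 < p < 2, Ω ⊂ ℝ^d bounded of measure 1, and suppose {(e_λ, e_λ*)}, λ ∈ Λ, is a K-unconditional Schauder frame of exponentials in L^p(Ω). Partition Λ into blocks Λ_k = Λ ∩ Q_k where {Q_k} are congruent cubes of diameter δ tiling ℝ^d, δ chosen so that |λ − λ'| ≤ δ implies ‖e_λ − e_{λ'}‖_p < 1/2. Then for every f ∈ L^p(Ω): (Σ_k (Σ_{λ∈Λ_k} |e_λ*(f)|)²)^{1/2} ≤ 2 K C_p ‖f‖_p. -/

import Mathlib

open MeasureTheory

/-- The Rademacher functions `r_n(t) = sign (sin (2^n π t))`. -/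
noncomputable def rademacher (n : ℕ) (t : ℝ) : ℝ :=
  Real.sign (Real.sin (2 ^ n * Real.pi * t))

/-- The exponential `e_λ(x) = e^{2πi⟨λ,x⟩}` on `ℝ^d`. -/
noncomputable def expFun {d : ℕ} (lam x : EuclideanSpace ℝ (Fin d)) : ℂ :=
  Complex.exp (2 * Real.pi * Complex.I * ((inner ℝ lam x : ℝ) : ℂ))

lemma abs_rademacher_le (n : ℕ) (t : ℝ) : |rademacher n t| ≤ 1 := by
  unfold rademacher
  set x := Real.sin (2 ^ n * Real.pi * t)
  rcases lt_trichotomy x 0 with h|h|h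
  · rw [Real.sign_of_neg h]; norm_num
  · rw [h, Real.sign_zero]; norm_num
  · rw [Real.sign_of_pos h]; norm_num

section core

variable {E : Type*} [NormedAddCommGroup E] [NormedSpace ℝ E] [CompleteSpace E]
variable {ι : Type*}

/-- Block partial-sum bound from unconditionality. -/
lemma core_block_bound (b : ℕ → ι) (u : ℕ → E) (a : ℕ → ℝ) (ha0 : ∀ n, 0 ≤ a n)
    (M : ℝ) (hM0 : 0 ≤ M)
    (hnu : ∀ n, ‖u n‖ = 1) (hns : ∀ n m, b n = b m → ‖u n - u m‖ ≤ 1/2)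
    (huncond : ∀ ε : ℕ → ℝ, (∀ n, |ε n| ≤ 1) →
      ∃ y, HasSum (fun n => ε n • (a n • u n)) y ∧ ‖y‖ ≤ M)
    (S : Finset ℕ) (k : ι) (hS : ∀ n ∈ S, b n = k) : (∑ n ∈ S, a n) ≤ 2 * M := by
  classical
  rcases S.eq_empty_or_nonempty with rfl | ⟨n0, hn0⟩
  · simpa using (by linarith : (0:ℝ) ≤ 2 * M)
  obtain ⟨y, hy, hyb⟩ := huncond (fun n => if n ∈ S then 1 else 0) (by
    intro n
    show |if n ∈ S then (1:ℝ) else 0| ≤ 1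
    split_ifs <;> norm_num)
  have heq : (fun n => (if n ∈ S then (1:ℝ) else 0) • (a n • u n))
      = fun n => if n ∈ S then a n • u n else 0 := by
    funext n; split_ifs with h
    · rw [one_smul]
    · rw [zero_smul]
  rw [heq] at hy
  have hy2 : HasSum (fun n => if n ∈ S then a n • u n else 0)
      (∑ n ∈ S, a n • u n) := by
    have h := hasSum_sum_of_ne_finset_zero (L := SummationFilter.unconditional ℕ) (s := S)
      (f := fun n => if n ∈ S then a n • u n else 0) (by intro n hn; simp [hn])
    have he2 : (∑ n ∈ S, if n ∈ S then a n • u n else 0) = ∑ n ∈ S, a n • u n :=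
      Finset.sum_congr rfl (fun n hn => if_pos hn)
    rwa [he2] at h
  have hyeq : y = ∑ n ∈ S, a n • u n := hy.unique hy2
  have hkey : (∑ n ∈ S, a n) • u n0
      = (∑ n ∈ S, a n • u n) - ∑ n ∈ S, a n • (u n - u n0) := by
    rw [← Finset.sum_sub_distrib, Finset.sum_smul]
    congr 1; funext n
    rw [smul_sub]; abel
  have h1 : (∑ n ∈ S, a n) = ‖(∑ n ∈ S, a n) • u n0‖ := by
    rw [norm_smul, hnu, mul_one, Real.norm_eq_abs,
      abs_of_nonneg (Finset.sum_nonneg (fun n _ => ha0 n))]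
  have h2 : ‖∑ n ∈ S, a n • (u n - u n0)‖ ≤ (∑ n ∈ S, a n) * (1/2) := by
    calc ‖∑ n ∈ S, a n • (u n - u n0)‖ ≤ ∑ n ∈ S, ‖a n • (u n - u n0)‖ :=
          norm_sum_le _ _
      _ ≤ ∑ n ∈ S, a n * (1/2) := by
          apply Finset.sum_le_sum
          intro n hn
          rw [norm_smul, Real.norm_eq_abs, abs_of_nonneg (ha0 n)]
          exact mul_le_mul_of_nonneg_left
            (hns n n0 (by rw [hS n hn, hS n0 hn0])) (ha0 n)
      _ = (∑ n ∈ S, a n) * (1/2) := by rw [Finset.sum_mul]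
  have h3 : ‖∑ n ∈ S, a n • u n‖ ≤ M := by rw [← hyeq]; exact hyb
  have h4 : (∑ n ∈ S, a n) ≤ M + (∑ n ∈ S, a n) * (1/2) := by
    have h5 : ‖(∑ n ∈ S, a n) • u n0‖ ≤ M + (∑ n ∈ S, a n) * (1/2) := by
      rw [hkey]
      exact le_trans (norm_sub_le _ _) (add_le_add h3 h2)
    rwa [← h1] at h5
  linarith

/-- Summability of coefficients within each block. -/
lemma core_part1 (b : ℕ → ι) (u : ℕ → E) (a : ℕ → ℝ) (ha0 : ∀ n, 0 ≤ a n)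
    (M : ℝ) (hM0 : 0 ≤ M)
    (hnu : ∀ n, ‖u n‖ = 1) (hns : ∀ n m, b n = b m → ‖u n - u m‖ ≤ 1/2)
    (huncond : ∀ ε : ℕ → ℝ, (∀ n, |ε n| ≤ 1) →
      ∃ y, HasSum (fun n => ε n • (a n • u n)) y ∧ ‖y‖ ≤ M)
    (k : ι) : Summable (fun n : {n : ℕ // b n = k} => a n.1) := by
  have hnn : (0 : {n : ℕ // b n = k} → ℝ) ≤ fun n => a n.1 := fun n => ha0 n.1
  apply summable_of_sum_le (c := 2 * M) hnn
  intro S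
  have hmap : ∑ x ∈ S, a x.1
      = ∑ n ∈ S.map (Function.Embedding.subtype _), a n := by
    rw [Finset.sum_map]; rfl
  rw [hmap]
  apply core_block_bound b u a ha0 M hM0 hnu hns huncond _ k
  intro n hn
  rw [Finset.mem_map] at hn
  obtain ⟨x, _, rfl⟩ := hn
  exact x.2

/-- Summability of the block vectors. -/
lemma core_hsumv (b : ℕ → ι) (u : ℕ → E) (a : ℕ → ℝ) (ha0 : ∀ n, 0 ≤ a n)
    (hnu : ∀ n, ‖u n‖ = 1) (k : ι)
    (h1 : Summable (fun n : {n : ℕ // b n = k} => a n.1)) :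
    Summable (fun n : {n : ℕ // b n = k} => a n.1 • u n.1) := by
  apply Summable.of_norm
  have heq : (fun n : {n : ℕ // b n = k} => ‖a n.1 • u n.1‖)
      = fun n : {n : ℕ // b n = k} => a n.1 := by
    funext n
    rw [norm_smul, hnu, mul_one, Real.norm_eq_abs, abs_of_nonneg (ha0 n.1)]
  rw [heq]
  exact h1

/-- Block coefficient sums are dominated by twice the norm of the block vector. -/
lemma core_hg (b : ℕ → ι) (u : ℕ → E) (a : ℕ → ℝ) (ha0 : ∀ n, 0 ≤ a n)
    (hnu : ∀ n, ‖u n‖ = 1) (hns : ∀ n m, b n = b m → ‖u n - u m‖ ≤ 1/2) (k : ι)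
    (h1 : Summable (fun n : {n : ℕ // b n = k} => a n.1)) :
    (∑' n : {n : ℕ // b n = k}, a n.1)
      ≤ 2 * ‖∑' n : {n : ℕ // b n = k}, a n.1 • u n.1‖ := by
  by_cases hk : Nonempty {n : ℕ // b n = k}
  · obtain ⟨⟨n0, hn0⟩⟩ := hk
    set A := ∑' n : {n : ℕ // b n = k}, a n.1 with hAdef
    set G := ∑' n : {n : ℕ // b n = k}, a n.1 • u n.1 with hGdef
    have hA0 : 0 ≤ A := tsum_nonneg (fun n => ha0 n.1)
    have hle : ∀ n : {n : ℕ // b n = k}, ‖a n.1 • (u n.1 - u n0)‖ ≤ a n.1 := by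
      intro n
      rw [norm_smul, Real.norm_eq_abs, abs_of_nonneg (ha0 n.1)]
      calc a n.1 * ‖u n.1 - u n0‖ ≤ a n.1 * 1 := by
            apply mul_le_mul_of_nonneg_left _ (ha0 n.1)
            exact le_trans (hns n.1 n0 (by rw [n.2, hn0])) (by norm_num)
        _ = a n.1 := mul_one _
    have hsub : Summable (fun n : {n : ℕ // b n = k} => a n.1 • (u n.1 - u n0)) :=
      Summable.of_norm (Summable.of_nonneg_of_le (fun n => norm_nonneg _) hle h1)
    have hns' : Summable (fun n : {n : ℕ // b n = k} => ‖a n.1 • (u n.1 - u n0)‖) :=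
      Summable.of_nonneg_of_le (fun n => norm_nonneg _) hle h1
    have hkey : G = A • u n0 + ∑' n : {n : ℕ // b n = k}, a n.1 • (u n.1 - u n0) := by
      rw [hGdef, hAdef]
      have hpt : (fun n : {n : ℕ // b n = k} => a n.1 • u n.1)
          = fun n : {n : ℕ // b n = k} => a n.1 • u n0 + a n.1 • (u n.1 - u n0) := by
        funext n; rw [smul_sub]; abel
      rw [hpt, Summable.tsum_add (h1.smul_const (u n0)) hsub, Summable.tsum_smul_const h1]
    have h2 : ‖∑' n : {n : ℕ // b n = k}, a n.1 • (u n.1 - u n0)‖ ≤ A * (1/2) := by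
      calc ‖∑' n : {n : ℕ // b n = k}, a n.1 • (u n.1 - u n0)‖
          ≤ ∑' n : {n : ℕ // b n = k}, ‖a n.1 • (u n.1 - u n0)‖ :=
            norm_tsum_le_tsum_norm hns'
        _ ≤ ∑' n : {n : ℕ // b n = k}, a n.1 * (1/2) := by
            apply Summable.tsum_le_tsum _ hns' (h1.mul_right _)
            intro n
            rw [norm_smul, Real.norm_eq_abs, abs_of_nonneg (ha0 n.1)]
            exact mul_le_mul_of_nonneg_left (hns n.1 n0 (by rw [n.2, hn0])) (ha0 n.1)
        _ = A * (1/2) := by rw [tsum_mul_right]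
    have hd : A • u n0 = G - ∑' n : {n : ℕ // b n = k}, a n.1 • (u n.1 - u n0) := by
      rw [hkey]; abel
    have h1' : A = ‖A • u n0‖ := by
      rw [norm_smul, hnu, mul_one, Real.norm_eq_abs, abs_of_nonneg hA0]
    have h3 : A ≤ ‖G‖ + A * (1/2) := by
      have h5 : ‖A • u n0‖ ≤ ‖G‖ + A * (1/2) := by
        rw [hd]
        exact le_trans (norm_sub_le _ _) (add_le_add_right h2 _)
      rwa [← h1'] at h5
    linarith
  · rw [not_nonempty_iff] at hk
    haveI := hk
    rw [tsum_empty]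
    positivity

/-- Grouped unconditionality bound. -/
lemma core_hgroup [DecidableEq ι] (b : ℕ → ι) (u : ℕ → E) (a : ℕ → ℝ) (ha0 : ∀ n, 0 ≤ a n)
    (M : ℝ)
    (huncond : ∀ ε : ℕ → ℝ, (∀ n, |ε n| ≤ 1) →
      ∃ y, HasSum (fun n => ε n • (a n • u n)) y ∧ ‖y‖ ≤ M)
    (hsumv : ∀ k : ι, Summable (fun n : {n : ℕ // b n = k} => a n.1 • u n.1))
    (T : Finset ι) (ε : ι → ℝ) (hε1 : ∀ k, |ε k| ≤ 1) (hε0 : ∀ k ∉ T, ε k = 0) :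
    ‖∑ k ∈ T, ε k • (∑' n : {n : ℕ // b n = k}, a n.1 • u n.1)‖ ≤ M := by
  obtain ⟨y, hy, hyb⟩ := huncond (fun n => ε (b n)) (fun n => hε1 (b n))
  have heq : (fun n => ε (b n) • (a n • u n))
      = fun n => ∑ k ∈ T, Set.indicator {m | b m = k}
          (fun m => ε k • (a m • u m)) n := by
    funext n
    have hind : ∀ k, Set.indicator {m | b m = k} (fun m => ε k • (a m • u m)) n
        = if b n = k then ε k • (a n • u n) else 0 := by
      intro k
      rw [Set.indicator_apply]
      simp only [Set.mem_setOf_eq]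
    simp only [hind]
    rw [Finset.sum_ite_eq]
    split_ifs with h
    · rfl
    · rw [hε0 _ h, zero_smul]
  have hy2 : HasSum (fun n => ∑ k ∈ T, Set.indicator {m | b m = k}
      (fun m => ε k • (a m • u m)) n)
      (∑ k ∈ T, ε k • (∑' n : {n : ℕ // b n = k}, a n.1 • u n.1)) := by
    apply hasSum_sum
    intro k _
    apply hasSum_subtype_iff_indicator.mp
    exact ((hsumv k).hasSum.const_smul (ε k))
  rw [heq] at hy
  rw [← hy.unique hy2]
  exact hyb

/-- Uniform bound on finite sums of squared block coefficient sums, via cotype 2. -/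
lemma core_hTsum [DecidableEq ι] (b : ℕ → ι) (u : ℕ → E) (a : ℕ → ℝ) (ha0 : ∀ n, 0 ≤ a n)
    (M : ℝ) (hM0 : 0 ≤ M)
    (hnu : ∀ n, ‖u n‖ = 1) (hns : ∀ n m, b n = b m → ‖u n - u m‖ ≤ 1/2)
    (huncond : ∀ ε : ℕ → ℝ, (∀ n, |ε n| ≤ 1) →
      ∃ y, HasSum (fun n => ε n • (a n • u n)) y ∧ ‖y‖ ≤ M)
    (C : ℝ) (hC : 0 < C)
    (hcotype : ∀ (N : ℕ) (F : Fin N → E),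
      C⁻¹ * (∑ j, ‖F j‖ ^ 2) ^ ((1:ℝ)/2) ≤
        ∫ t in Set.Icc (0:ℝ) 1, ‖∑ j, rademacher (j.1 + 1) t • F j‖)
    (T : Finset ι) :
    (∑ k ∈ T, (∑' n : {n : ℕ // b n = k}, a n.1) ^ 2) ≤ (2 * C * M) ^ 2 := by
  classical
  have part1 : ∀ k : ι, Summable (fun n : {n : ℕ // b n = k} => a n.1) :=
    core_part1 b u a ha0 M hM0 hnu hns huncond
  have hsumv : ∀ k : ι, Summable (fun n : {n : ℕ // b n = k} => a n.1 • u n.1) :=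
    fun k => core_hsumv b u a ha0 hnu k (part1 k)
  set g : ι → E := fun k => ∑' n : {n : ℕ // b n = k}, a n.1 • u n.1 with hgdef
  set σ := T.equivFin with hσdef
  set F : Fin T.card → E := fun j => g (σ.symm j).1 with hFdef
  have hc := hcotype T.card F
  have hsum2 : ∑ j, ‖F j‖ ^ 2 = ∑ k ∈ T, ‖g k‖ ^ 2 := by
    rw [← Equiv.sum_comp σ (fun j => ‖F j‖ ^ 2)]
    simp only [hFdef, Equiv.symm_apply_apply]
    rw [← Finset.sum_coe_sort T (fun k => ‖g k‖ ^ 2)]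
  have hpt : ∀ t : ℝ, ‖∑ j, rademacher (j.1 + 1) t • F j‖ ≤ M := by
    intro t
    set ε : ι → ℝ :=
      fun k => if h : k ∈ T then rademacher ((σ ⟨k, h⟩).1 + 1) t else 0 with hεdef
    have hre : ∑ j, rademacher (j.1 + 1) t • F j = ∑ k ∈ T, ε k • g k := by
      rw [← Finset.sum_coe_sort T (fun k => ε k • g k)]
      rw [← Equiv.sum_comp σ (fun j => rademacher (j.1 + 1) t • F j)]
      apply Finset.sum_congr rfl
      intro x _
      simp only [hFdef, Equiv.symm_apply_apply, hεdef, x.2, dif_pos]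
    rw [hre]
    apply core_hgroup b u a ha0 M huncond hsumv T ε
    · intro k
      simp only [hεdef]
      split_ifs with h
      · exact abs_rademacher_le _ _
      · simp
    · intro k hk
      simp only [hεdef, dif_neg hk]
  have hint : (∫ t in Set.Icc (0:ℝ) 1, ‖∑ j, rademacher (j.1 + 1) t • F j‖) ≤ M := by
    have hconst : (∫ _t in Set.Icc (0:ℝ) 1, M) = M := by
      rw [setIntegral_const, Real.volume_real_Icc]
      norm_num
    calc (∫ t in Set.Icc (0:ℝ) 1, ‖∑ j, rademacher (j.1 + 1) t • F j‖)
        ≤ ∫ _t in Set.Icc (0:ℝ) 1, M := by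
          apply integral_mono_of_nonneg
          · exact Filter.Eventually.of_forall (fun t => norm_nonneg _)
          · exact integrableOn_const (by rw [Real.volume_Icc]; norm_num)
          · exact Filter.Eventually.of_forall hpt
      _ = M := hconst
  have hgsq0 : 0 ≤ ∑ k ∈ T, ‖g k‖ ^ 2 :=
    Finset.sum_nonneg (fun k _ => sq_nonneg _)
  have h12 : (∑ k ∈ T, ‖g k‖ ^ 2) ^ ((1:ℝ)/2) ≤ C * M := by
    have hcm := le_trans hc hint
    rw [hsum2] at hcm
    calc (∑ k ∈ T, ‖g k‖ ^ 2) ^ ((1:ℝ)/2)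
        = C * (C⁻¹ * (∑ k ∈ T, ‖g k‖ ^ 2) ^ ((1:ℝ)/2)) := by
          field_simp
      _ ≤ C * M := mul_le_mul_of_nonneg_left hcm hC.le
  have hgsq : ∑ k ∈ T, ‖g k‖ ^ 2 ≤ (C * M) ^ 2 := by
    have hid : ∑ k ∈ T, ‖g k‖ ^ 2 = ((∑ k ∈ T, ‖g k‖ ^ 2) ^ ((1:ℝ)/2)) ^ 2 := by
      rw [← Real.rpow_natCast ((∑ k ∈ T, ‖g k‖ ^ 2) ^ ((1:ℝ)/2)) 2,
        ← Real.rpow_mul hgsq0]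
      norm_num
    rw [hid]
    exact pow_le_pow_left₀ (Real.rpow_nonneg hgsq0 _) h12 2
  calc ∑ k ∈ T, (∑' n : {n : ℕ // b n = k}, a n.1) ^ 2
      ≤ ∑ k ∈ T, (2 * ‖g k‖) ^ 2 := by
        apply Finset.sum_le_sum
        intro k _
        exact pow_le_pow_left₀
          (tsum_nonneg (fun n : {n : ℕ // b n = k} => ha0 n.1))
          (core_hg b u a ha0 hnu hns k (part1 k)) 2
    _ = 4 * ∑ k ∈ T, ‖g k‖ ^ 2 := by
        rw [Finset.mul_sum]; apply Finset.sum_congr rfl; intro k _; ring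
    _ ≤ 4 * (C * M) ^ 2 := by linarith
    _ = (2 * C * M) ^ 2 := by ring

/-- The abstract core of Statement 19. -/
lemma core_final [DecidableEq ι] (b : ℕ → ι) (u : ℕ → E) (a : ℕ → ℝ) (ha0 : ∀ n, 0 ≤ a n)
    (M : ℝ) (hM0 : 0 ≤ M)
    (hnu : ∀ n, ‖u n‖ = 1) (hns : ∀ n m, b n = b m → ‖u n - u m‖ ≤ 1/2)
    (huncond : ∀ ε : ℕ → ℝ, (∀ n, |ε n| ≤ 1) →
      ∃ y, HasSum (fun n => ε n • (a n • u n)) y ∧ ‖y‖ ≤ M)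
    (C : ℝ) (hC : 0 < C)
    (hcotype : ∀ (N : ℕ) (F : Fin N → E),
      C⁻¹ * (∑ j, ‖F j‖ ^ 2) ^ ((1:ℝ)/2) ≤
        ∫ t in Set.Icc (0:ℝ) 1, ‖∑ j, rademacher (j.1 + 1) t • F j‖) :
    (∀ k : ι, Summable (fun n : {n : ℕ // b n = k} => a n.1)) ∧
    Summable (fun k : ι => (∑' n : {n : ℕ // b n = k}, a n.1) ^ 2) ∧
    (∑' k : ι, (∑' n : {n : ℕ // b n = k}, a n.1) ^ 2) ^ ((1:ℝ)/2) ≤ 2 * C * M := by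
  have hTsum := core_hTsum b u a ha0 M hM0 hnu hns huncond C hC hcotype
  have part1 : ∀ k : ι, Summable (fun n : {n : ℕ // b n = k} => a n.1) :=
    core_part1 b u a ha0 M hM0 hnu hns huncond
  have part2 : Summable (fun k : ι => (∑' n : {n : ℕ // b n = k}, a n.1) ^ 2) :=
    summable_of_sum_le (fun k => sq_nonneg _) hTsum
  refine ⟨part1, part2, ?_⟩
  have htsumle : (∑' k : ι, (∑' n : {n : ℕ // b n = k}, a n.1) ^ 2)
      ≤ (2 * C * M) ^ 2 := Summable.tsum_le_of_sum_le part2 hTsum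
  have ht0 : 0 ≤ ∑' k : ι, (∑' n : {n : ℕ // b n = k}, a n.1) ^ 2 :=
    tsum_nonneg (fun k => sq_nonneg _)
  have hB0 : 0 ≤ 2 * C * M := by positivity
  calc (∑' k : ι, (∑' n : {n : ℕ // b n = k}, a n.1) ^ 2) ^ ((1:ℝ)/2)
      ≤ ((2 * C * M) ^ 2) ^ ((1:ℝ)/2) :=
        Real.rpow_le_rpow ht0 htsumle (by norm_num)
    _ = 2 * C * M := by
        rw [← Real.rpow_natCast (2 * C * M) 2, ← Real.rpow_mul hB0]
        norm_num

end core


lemma coe_smul_lp {α : Type*} [MeasurableSpace α] {μ : Measure α} {q : ENNReal}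
    (x : ℝ) (v : Lp ℂ q μ) : (x : ℂ) • v = x • v := by
  rw [← Complex.coe_algebraMap, Algebra.algebraMap_eq_smul_one, smul_one_smul]


set_option maxHeartbeats 2000000 in
/-- Let `1 < p < 2`, `Ω ⊂ ℝ^d` bounded of measure 1, and
`{(e_λ, e_λ*)}`, `λ ∈ Λ` (enumerated by `ℕ`), a `K`-unconditional Schauder frame of
exponentials in `L^p(Ω)`. Partition `Λ` into blocks `Λ_k = Λ ∩ Q_k`, where `{Q_k}`,
`k ∈ ℤ^d`, are the congruent half-open cubes of side `δ/√d` (hence diameter `δ`)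
tiling `ℝ^d`, with `δ` such that `|λ - λ'| ≤ δ` implies `‖e_λ - e_{λ'}‖_p < 1/2`.
Then for every `f ∈ L^p(Ω)`:
`(∑_k (∑_{λ∈Λ_k} |e_λ*(f)|)²)^{1/2} ≤ 2 K C_p ‖f‖_p`, with `C_p` a cotype-2
constant of `L^p(Ω)`. -/
theorem stmt19 (d : ℕ) (hd : 0 < d)
    (Ω : Set (EuclideanSpace ℝ (Fin d))) (hΩmeas : MeasurableSet Ω)
    (hΩbdd : Bornology.IsBounded Ω) (hΩvol : volume Ω = 1)
    (p : ℝ) (hp1 : 1 < p) (hp2 : p < 2) [Fact (1 ≤ ENNReal.ofReal p)]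
    (lam : ℕ → EuclideanSpace ℝ (Fin d))
    (e : ℕ → Lp ℂ (ENNReal.ofReal p) (volume.restrict Ω))
    (es : ℕ → Lp ℂ (ENNReal.ofReal p) (volume.restrict Ω) →L[ℂ] ℂ)
    (he : ∀ n, ⇑(e n) =ᵐ[volume.restrict Ω] expFun (lam n))
    (hframe : ∀ f, HasSum (fun n => es n f • e n) f)
    (K : ℝ)
    (hK : ∀ (f : Lp ℂ (ENNReal.ofReal p) (volume.restrict Ω)) (θ : ℕ → ℂ),
      (∀ n, ‖θ n‖ ≤ 1) →
      ∃ y, HasSum (fun n => θ n • (es n f • e n)) y ∧ ‖y‖ ≤ K * ‖f‖)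
    (δ : ℝ) (hδ : 0 < δ)
    (hδclose : ∀ lam₁ lam₂ : EuclideanSpace ℝ (Fin d), dist lam₁ lam₂ ≤ δ →
      (eLpNorm (fun x => expFun lam₁ x - expFun lam₂ x) (ENNReal.ofReal p)
        (volume.restrict Ω)).toReal < 1/2)
    -- the block of the cube (of side `δ/√d`) containing `λ_n`:
    (b : ℕ → Fin d → ℤ) (hb : ∀ n i, b n i = ⌊lam n i / (δ / Real.sqrt d)⌋)
    (C : ℝ) (hC : 0 < C)
    -- `C` is a cotype-2 constant of `L^p(Ω)`:
    (hcotype : ∀ (N : ℕ) (F : Fin N → Lp ℂ (ENNReal.ofReal p) (volume.restrict Ω)),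
      C⁻¹ * (∑ j, ‖F j‖ ^ 2) ^ ((1:ℝ)/2) ≤
        ∫ t in Set.Icc (0:ℝ) 1, ‖∑ j, rademacher (j.1 + 1) t • F j‖) :
    ∀ f : Lp ℂ (ENNReal.ofReal p) (volume.restrict Ω),
      (∀ k : Fin d → ℤ, Summable (fun n : {n : ℕ // b n = k} => ‖es n.1 f‖)) ∧
      Summable (fun k : Fin d → ℤ => (∑' n : {n : ℕ // b n = k}, ‖es n.1 f‖) ^ 2) ∧
      (∑' k : Fin d → ℤ, (∑' n : {n : ℕ // b n = k}, ‖es n.1 f‖) ^ 2) ^ ((1:ℝ)/2) ≤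
        2 * K * C * ‖f‖ := by
  intro f
  classical
  -- basic measure facts
  have hμuniv : (volume.restrict Ω) Set.univ = 1 := by
    rw [Measure.restrict_apply_univ, hΩvol]
  have hμne : volume.restrict Ω ≠ 0 := by
    intro h; rw [h] at hμuniv; simp at hμuniv
  have hpne : ENNReal.ofReal p ≠ 0 := by
    simp only [ne_eq, ENNReal.ofReal_eq_zero, not_le]; linarith
  -- norms of the exponentials
  have hnorm_e : ∀ n, ‖e n‖ = 1 := by
    intro n
    rw [Lp.norm_def, eLpNorm_congr_ae (he n)]
    have h1 : eLpNorm (expFun (lam n)) (ENNReal.ofReal p) (volume.restrict Ω)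
        = eLpNorm (fun _ : EuclideanSpace ℝ (Fin d) => (1:ℂ)) (ENNReal.ofReal p)
            (volume.restrict Ω) := by
      apply eLpNorm_congr_norm_ae
      filter_upwards with x
      simp [expFun, Complex.norm_exp, Complex.mul_re, Complex.mul_im]
    rw [h1, eLpNorm_const _ hpne hμne]
    simp [hμuniv]
  -- distance bound within a block
  have hnorm_sub : ∀ n m, b n = b m → ‖e n - e m‖ ≤ 1/2 := by
    intro n m hbnm
    have hsd : (0:ℝ) < Real.sqrt d := Real.sqrt_pos.2 (by exact_mod_cast hd)
    set s : ℝ := δ / Real.sqrt d with hs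
    have hs0 : 0 < s := div_pos hδ hsd
    have hdist : dist (lam n) (lam m) ≤ δ := by
      rw [EuclideanSpace.dist_eq]
      have hterm : ∀ i : Fin d, dist (lam n i) (lam m i) ^ 2 ≤ s ^ 2 := by
        intro i
        have hfe : ⌊lam n i / s⌋ = ⌊lam m i / s⌋ := by
          have h1 := hb n i; have h2 := hb m i
          rw [← h1, ← h2, hbnm]
        have h1 : |lam n i / s - lam m i / s| < 1 :=
          Int.abs_sub_lt_one_of_floor_eq_floor hfe
        have h2 : |lam n i - lam m i| ≤ s := by
          have heq : lam n i - lam m i = s * (lam n i / s - lam m i / s) := by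
            field_simp
          rw [heq, abs_mul, abs_of_pos hs0]
          nlinarith [abs_nonneg (lam n i / s - lam m i / s)]
        rw [Real.dist_eq]
        nlinarith [abs_nonneg (lam n i - lam m i)]
      have hsum : ∑ i : Fin d, dist (lam n i) (lam m i) ^ 2 ≤ (d : ℝ) * s ^ 2 := by
        calc ∑ i : Fin d, dist (lam n i) (lam m i) ^ 2 ≤ ∑ _i : Fin d, s ^ 2 :=
              Finset.sum_le_sum (fun i _ => hterm i)
          _ = (d : ℝ) * s ^ 2 := by simp [mul_comm]
      calc Real.sqrt (∑ i : Fin d, dist (lam n i) (lam m i) ^ 2)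
          ≤ Real.sqrt ((d:ℝ) * s ^ 2) := Real.sqrt_le_sqrt hsum
        _ = Real.sqrt d * s := by
            rw [Real.sqrt_mul (by positivity), Real.sqrt_sq hs0.le]
        _ = δ := by rw [hs]; field_simp
    have hlt := hδclose (lam n) (lam m) hdist
    have hco : ⇑(e n - e m) =ᵐ[volume.restrict Ω]
        fun x => expFun (lam n) x - expFun (lam m) x := by
      filter_upwards [Lp.coeFn_sub (e n) (e m), he n, he m] with x h1 h2 h3
      rw [h1, Pi.sub_apply, h2, h3]
    rw [Lp.norm_def, eLpNorm_congr_ae hco]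
    linarith
  -- K * ‖f‖ is nonnegative
  have hKf0 : 0 ≤ K * ‖f‖ := by
    obtain ⟨y, hy, hyb⟩ := hK f (fun _ => (1:ℂ)) (by intro n; norm_num)
    simp only [one_smul] at hy
    have hyf : y = f := hy.unique (hframe f)
    rw [hyf] at hyb
    exact le_trans (norm_nonneg f) hyb
  -- the coefficients and the sign multipliers
  set a : ℕ → ℝ := fun n => ‖es n f‖ with hadef
  have ha0 : ∀ n, 0 ≤ a n := fun n => norm_nonneg _
  set θ : ℕ → ℂ := fun n => if es n f = 0 then 0 else (‖es n f‖ : ℂ) / es n f with hθdef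
  have hθ1 : ∀ n, ‖θ n‖ ≤ 1 := by
    intro n
    show ‖if es n f = 0 then 0 else (‖es n f‖ : ℂ) / es n f‖ ≤ 1
    split_ifs with h
    · simp
    · rw [norm_div, Complex.norm_real, norm_norm, div_self (norm_ne_zero_iff.2 h)]
  have hθsmul : ∀ n, θ n • (es n f • e n) = a n • e n := by
    intro n
    rw [smul_smul, ← coe_smul_lp]
    congr 1
    show (if es n f = 0 then 0 else (‖es n f‖ : ℂ) / es n f) * es n f = _
    split_ifs with h
    · simp [hadef, h]
    · field_simp
      simp [hadef]
  -- real unconditionality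
  have huncond : ∀ ε : ℕ → ℝ, (∀ n, |ε n| ≤ 1) →
      ∃ y, HasSum (fun n => ε n • (a n • e n)) y ∧ ‖y‖ ≤ K * ‖f‖ := by
    intro ε hε
    obtain ⟨y, hy, hyb⟩ := hK f (fun n => (ε n : ℂ) * θ n) (by
      intro n
      rw [norm_mul, Complex.norm_real, Real.norm_eq_abs]
      calc |ε n| * ‖θ n‖ ≤ 1 * 1 :=
            mul_le_mul (hε n) (hθ1 n) (norm_nonneg _) zero_le_one
        _ = 1 := mul_one 1)
    refine ⟨y, ?_, hyb⟩
    have heq : (fun n => ((ε n : ℂ) * θ n) • (es n f • e n))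
        = fun n => ε n • (a n • e n) := by
      funext n
      rw [mul_smul, hθsmul n, coe_smul_lp]
    rwa [heq] at hy
  -- apply the abstract core lemma
  obtain ⟨h1, h2, h3⟩ := core_final b e a ha0 (K * ‖f‖) hKf0 hnorm_e hnorm_sub
    huncond C hC hcotype
  refine ⟨h1, h2, ?_⟩
  calc (∑' k : Fin d → ℤ, (∑' n : {n : ℕ // b n = k}, a n.1) ^ 2) ^ ((1:ℝ)/2)
      ≤ 2 * C * (K * ‖f‖) := h3
    _ = 2 * K * C * ‖f‖ := by ring
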